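/- The function f_3 defined on the unit disk by f_3(z) = ∫₀^z (1 + tanh(t³))^{1/2} dt belongs to the class BT_B and satisfies |a_2·a_3 − a_4| = 1/8 (its Taylor coefficients satisfy a_2 = a_3 = 0 and a_4 = 1/8). Hence the Zalcman bound |a_2·a_3 − a_4| ≤ 1/8 for the class BT_B is sharp. -/

import Mathlib

open Complex Metric

/-- Principal branch of the square root: `w^(1/2) = exp((1/2) * Log w)`. -/
noncomputable def psqrt (w : ℂ) : ℂ := Complex.exp ((1/2 : ℂ) * Complex.log w)

/-- The `n`-th Taylor coefficient of `f` at `0`, i.e. `f^(n)(0)/n!`. -/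
noncomputable def tCoeff (f : ℂ → ℂ) (n : ℕ) : ℂ := iteratedDeriv n f 0 / n.factorial

/-- The class `BT_B` of bounded turning functions associated with the bean-shaped domain:
`f` is analytic on the unit disk, `f 0 = 0`, `f' 0 = 1`, `f` injective on the disk,
and `f'(z) = (1 + tanh (ω z))^(1/2)` for a Schwarz function `ω`. -/
def IsBTB (f : ℂ → ℂ) : Prop :=
  AnalyticOnNhd ℂ f (ball 0 1) ∧ f 0 = 0 ∧ deriv f 0 = 1 ∧
  Set.InjOn f (ball 0 1) ∧
  ∃ ω : ℂ → ℂ, AnalyticOnNhd ℂ ω (ball 0 1) ∧ ω 0 = 0 ∧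
    (∀ z ∈ ball (0:ℂ) 1, ‖ω z‖ < 1) ∧
    (∀ z ∈ ball (0:ℂ) 1, deriv f z = psqrt (1 + Complex.tanh (ω z)))

noncomputable def f₃ (z : ℂ) : ℂ :=
  ∫ t in (0:ℝ)..1, z * psqrt (1 + Complex.tanh (((t : ℂ) * z)^3))

/-!
For `|Im w| < π/2` one has `1 + tanh w = 2 / (1 + exp (-2w))` with `exp (-2w)` off the negative
real axis, so `h w = (1 + tanh w)^(1/2)` is holomorphic there and `Re h > 0`. On the unit disk
`|Im z³| < 1 < π/2`, so `g z = h (z³)` has a primitive `G`, and `f₃ = G - G 0` by the fundamental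
theorem of calculus along `[0, z]`; hence `f₃' = g`, and `Re f₃' > 0` makes `f₃` univalent.
Finally `f₃'' z = z² · 3 h' (z³)`, so Leibniz' rule gives `f₃''(0) = f₃'''(0) = 0` and
`f₃⁗(0) = 2 · 3 h'(0) = 3`, i.e. `a₄ = 3 / 4! = 1/8`.
-/

open Set Filter Topology
open scoped Real Nat

namespace Complex

lemma one_add_mem_slitPlane {z : ℂ} (hz : z ∈ slitPlane) : 1 + z ∈ slitPlane := by
  rw [mem_slitPlane_iff] at hz ⊢
  rw [add_re, one_re, add_im, one_im, zero_add]
  exact hz.imp (fun h => by linarith) id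

lemma inv_mem_slitPlane {z : ℂ} (hz : z ∈ slitPlane) : z⁻¹ ∈ slitPlane := by
  have hpos : 0 < normSq z := normSq_pos.2 (slitPlane_ne_zero hz)
  rw [mem_slitPlane_iff] at hz ⊢
  rw [inv_re, inv_im]
  exact hz.imp (fun h => div_pos h hpos) (fun h => div_ne_zero (neg_ne_zero.2 h) hpos.ne')

lemma ofReal_mul_mem_slitPlane {r : ℝ} (hr : 0 < r) {z : ℂ} (hz : z ∈ slitPlane) :
    (r : ℂ) * z ∈ slitPlane := by
  rw [mem_slitPlane_iff] at hz ⊢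
  rw [re_ofReal_mul, im_ofReal_mul]
  exact hz.imp (mul_pos hr) (mul_ne_zero hr.ne')

lemma exp_mem_slitPlane_of_abs_im_lt {z : ℂ} (hz : |z.im| < π) : exp z ∈ slitPlane := by
  obtain ⟨hlo, hhi⟩ := abs_lt.1 hz
  rw [exp_mem_slitPlane, (toIocMod_eq_self _).2 ⟨hlo, by linarith⟩]
  exact hhi.ne

lemma cosh_eq_exp_mul (z : ℂ) : cosh z = exp z * (1 + exp (-(2 * z))) / 2 := by
  rw [cosh, mul_add, ← exp_add]
  ring_nf

lemma one_add_exp_neg_two_mul_mem_slitPlane {z : ℂ} (hz : |z.im| < π / 2) :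
    1 + exp (-(2 * z)) ∈ slitPlane := by
  refine one_add_mem_slitPlane (exp_mem_slitPlane_of_abs_im_lt ?_)
  have : (2 * z).im = 2 * z.im := by simp
  rw [neg_im, abs_neg, this, abs_mul, abs_two]
  linarith

lemma cosh_ne_zero_of_abs_im_lt {z : ℂ} (hz : |z.im| < π / 2) : cosh z ≠ 0 := by
  rw [cosh_eq_exp_mul]
  exact div_ne_zero (mul_ne_zero (exp_ne_zero z)
    (slitPlane_ne_zero (one_add_exp_neg_two_mul_mem_slitPlane hz))) two_ne_zero

lemma one_add_tanh_mem_slitPlane {z : ℂ} (hz : |z.im| < π / 2) : 1 + tanh z ∈ slitPlane := by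
  have hcosh := cosh_ne_zero_of_abs_im_lt hz
  have h : 1 + tanh z = ((2 : ℝ) : ℂ) * (1 + exp (-(2 * z)))⁻¹ := by
    rw [tanh_eq_sinh_div_cosh, one_add_div hcosh, cosh_add_sinh]
    rw [cosh_eq_exp_mul] at hcosh ⊢
    field_simp
    push_cast
    ring
  rw [h]
  exact ofReal_mul_mem_slitPlane two_pos
    (inv_mem_slitPlane (one_add_exp_neg_two_mul_mem_slitPlane hz))

lemma hasDerivAt_tanh {z : ℂ} (hz : cosh z ≠ 0) : HasDerivAt tanh (1 / cosh z ^ 2) z := by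
  have h := (hasDerivAt_sinh z).div (hasDerivAt_cosh z) hz
  rw [show sinh / cosh = tanh from funext fun w => (tanh_eq_sinh_div_cosh w).symm] at h
  refine h.congr_deriv ?_
  rw [← cosh_sq_sub_sinh_sq z]
  ring

end Complex

theorem hasDerivAt_integral_mul_comp_ofReal_mul {g : ℂ → ℂ} {r : ℝ}
    (hg : DifferentiableOn ℂ g (ball 0 r)) {z : ℂ} (hz : z ∈ ball 0 r) :
    HasDerivAt (fun w : ℂ => ∫ t in (0 : ℝ)..1, w * g (t * w)) (g z) z := by
  obtain ⟨G, hG⟩ := hg.isExactOn_ball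
  have hseg : ∀ w ∈ ball (0 : ℂ) r, ∀ t ∈ Icc (0 : ℝ) 1, (t : ℂ) * w ∈ ball (0 : ℂ) r := by
    intro w hw t ht
    rw [mem_ball_zero_iff] at hw ⊢
    rw [norm_mul, norm_real, Real.norm_of_nonneg ht.1]
    exact (mul_le_of_le_one_left (norm_nonneg w) ht.2).trans_lt hw
  have hprimitive : ∀ w ∈ ball (0 : ℂ) r, ∫ t in (0 : ℝ)..1, w * g (t * w) = G w - G 0 := by
    intro w hw
    have hderiv : ∀ t ∈ uIcc (0 : ℝ) 1,
        HasDerivAt (fun t : ℝ => G (t * w)) (w * g (t * w)) t := by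
      intro t ht
      rw [uIcc_of_le zero_le_one] at ht
      have h := (hG _ (hseg w hw t ht)).comp (t : ℂ) ((hasDerivAt_id (t : ℂ)).mul_const w)
      simpa [mul_comm] using h.comp_ofReal
    have hint : IntervalIntegrable (fun t : ℝ => w * g (t * w)) MeasureTheory.volume 0 1 := by
      refine ContinuousOn.intervalIntegrable (continuousOn_const.mul (hg.continuousOn.comp
        (continuous_ofReal.mul continuous_const).continuousOn ?_))
      rw [uIcc_of_le zero_le_one]
      exact fun t ht => hseg w hw t ht
    simpa using intervalIntegral.integral_eq_sub_of_hasDerivAt hderiv hint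
  exact ((hG z hz).sub_const (G 0)).congr_of_eventuallyEq
    (eventually_of_mem (isOpen_ball.mem_nhds hz) hprimitive)

/-- Noshiro–Warschawski: on the segment from `a` to `b`, `Re ((f - f a) / (b - a))` is strictly
increasing. -/
theorem Convex.injOn_of_hasDerivAt_of_re_pos {s : Set ℂ} (hs : Convex ℝ s) {f f' : ℂ → ℂ}
    (hf : ∀ z ∈ s, HasDerivAt f (f' z) z) (hf' : ∀ z ∈ s, 0 < (f' z).re) : InjOn f s := by
  intro a ha b hb hab
  by_contra hne
  have hba : b - a ≠ 0 := sub_ne_zero.2 (Ne.symm hne)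
  have hseg : ∀ t ∈ Icc (0 : ℝ) 1, a + t * (b - a) ∈ s := fun t ht => by
    simpa using hs.add_smul_sub_mem ha hb ht
  have hderiv : ∀ t ∈ Icc (0 : ℝ) 1,
      HasDerivAt (fun t : ℝ => ((b - a)⁻¹ * f (a + t * (b - a))).re)
        (f' (a + t * (b - a))).re t := by
    intro t ht
    have hline : HasDerivAt (fun u : ℂ => a + u * (b - a)) (b - a) t := by
      simpa using ((hasDerivAt_id (t : ℂ)).mul_const (b - a)).const_add a
    have h : HasDerivAt (fun u : ℂ => (b - a)⁻¹ * f (a + u * (b - a)))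
        ((b - a)⁻¹ * (f' (a + t * (b - a)) * (b - a))) t :=
      ((hf _ (hseg t ht)).comp (t : ℂ) hline).const_mul _
    rw [mul_comm (f' _), inv_mul_cancel_left₀ hba] at h
    exact h.real_of_complex
  obtain ⟨c, hc, hslope⟩ := exists_hasDerivAt_eq_slope _ _ zero_lt_one
    (fun t ht => (hderiv t ht).continuousAt.continuousWithinAt)
    (fun t ht => hderiv t (Ioo_subset_Icc_self ht))
  have hends : ((b - a)⁻¹ * f (a + (1 : ℝ) * (b - a))).re =
      ((b - a)⁻¹ * f (a + (0 : ℝ) * (b - a))).re := by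
    simp [hab]
  rw [hends, sub_self, zero_div] at hslope
  exact (hf' _ (hseg c (Ioo_subset_Icc_self hc))).ne' hslope

theorem iteratedDeriv_pow_mul_zero {𝕜 : Type*} [NontriviallyNormedField 𝕜] {n : ℕ} (m : ℕ)
    {k : 𝕜 → 𝕜} (hk : ContDiffAt 𝕜 n k 0) :
    iteratedDeriv n (fun z => z ^ m * k z) 0 =
      if m ≤ n then n.choose m * m ! * iteratedDeriv (n - m) k 0 else 0 := by
  rw [iteratedDeriv_fun_mul (by fun_prop : ContDiffAt 𝕜 n (fun z : 𝕜 => z ^ m) 0) hk]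
  simp only [iteratedDeriv_fun_pow_zero]
  split_ifs with h
  · rw [Finset.sum_eq_single m]
    · simp
    · intro i _ hi
      simp [hi]
    · intro hm
      simp only [Finset.mem_range] at hm
      omega
  · refine Finset.sum_eq_zero fun i hi => ?_
    simp only [Finset.mem_range] at hi
    simp [show i ≠ m by omega]

lemma psqrt_one : psqrt 1 = 1 := by simp [psqrt]

lemma hasDerivAt_psqrt {w : ℂ} (hw : w ∈ slitPlane) :
    HasDerivAt psqrt (psqrt w / (2 * w)) w := by
  refine HasDerivAt.congr_deriv (f := fun w => exp (1 / 2 * log w))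
    ((hasDerivAt_log hw).const_mul (1 / 2 : ℂ)).cexp ?_
  unfold psqrt
  field_simp

lemma re_psqrt_pos {w : ℂ} (hw : w ∈ slitPlane) : 0 < (psqrt w).re := by
  have harg : -π < w.arg ∧ w.arg < π :=
    ⟨neg_pi_lt_arg w, (arg_le_pi w).lt_of_ne (slitPlane_arg_ne_pi hw)⟩
  rw [psqrt, exp_re]
  refine mul_pos (Real.exp_pos _) (Real.cos_pos_of_mem_Ioo ⟨?_, ?_⟩) <;>
    simp [log_im] <;> linarith

noncomputable def sqrtOneAddTanh (w : ℂ) : ℂ := psqrt (1 + tanh w)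

lemma hasDerivAt_sqrtOneAddTanh {w : ℂ} (hw : |w.im| < π / 2) :
    HasDerivAt sqrtOneAddTanh
      (sqrtOneAddTanh w / (2 * (1 + tanh w)) * (1 / cosh w ^ 2)) w :=
  (hasDerivAt_psqrt (one_add_tanh_mem_slitPlane hw)).comp w
    ((hasDerivAt_tanh (cosh_ne_zero_of_abs_im_lt hw)).const_add 1)

lemma sqrtOneAddTanh_zero : sqrtOneAddTanh 0 = 1 := by
  simp [sqrtOneAddTanh, psqrt_one]

lemma deriv_sqrtOneAddTanh_zero : deriv sqrtOneAddTanh 0 = 1 / 2 := by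
  rw [(hasDerivAt_sqrtOneAddTanh (by simpa using Real.pi_pos)).deriv, sqrtOneAddTanh_zero]
  simp

lemma analyticOnNhd_sqrtOneAddTanh :
    AnalyticOnNhd ℂ sqrtOneAddTanh {w | |w.im| < π / 2} :=
  DifferentiableOn.analyticOnNhd
    (fun _ hw => (hasDerivAt_sqrtOneAddTanh hw).differentiableAt.differentiableWithinAt)
    (isOpen_lt (continuous_abs.comp continuous_im) continuous_const)

lemma abs_im_lt_pi_div_two_of_norm_lt_one {w : ℂ} (hw : ‖w‖ < 1) : |w.im| < π / 2 :=
  calc |w.im| ≤ ‖w‖ := abs_im_le_norm w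
    _ < 1 := hw
    _ < π / 2 := by linarith [Real.pi_gt_three]

lemma norm_pow_lt_one_of_mem_ball {z : ℂ} (hz : z ∈ ball (0 : ℂ) 1) {n : ℕ} (hn : n ≠ 0) :
    ‖z ^ n‖ < 1 := by
  rw [norm_pow]
  exact pow_lt_one₀ (norm_nonneg z) (mem_ball_zero_iff.1 hz) hn

lemma abs_im_pow_three_lt {z : ℂ} (hz : z ∈ ball (0 : ℂ) 1) : |(z ^ 3).im| < π / 2 :=
  abs_im_lt_pi_div_two_of_norm_lt_one (norm_pow_lt_one_of_mem_ball hz three_ne_zero)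

lemma differentiableOn_sqrtOneAddTanh_comp_pow_three :
    DifferentiableOn ℂ (fun z => sqrtOneAddTanh (z ^ 3)) (ball 0 1) := fun z hz =>
  ((hasDerivAt_sqrtOneAddTanh (abs_im_pow_three_lt hz)).differentiableAt.comp z
    (differentiableAt_pow 3)).differentiableWithinAt

lemma hasDerivAt_f₃ {z : ℂ} (hz : z ∈ ball (0 : ℂ) 1) :
    HasDerivAt f₃ (sqrtOneAddTanh (z ^ 3)) z :=
  hasDerivAt_integral_mul_comp_ofReal_mul differentiableOn_sqrtOneAddTanh_comp_pow_three hz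

lemma isBTB_f₃ : IsBTB f₃ := by
  refine ⟨DifferentiableOn.analyticOnNhd
      (fun z hz => (hasDerivAt_f₃ hz).differentiableAt.differentiableWithinAt) isOpen_ball,
    by simp [f₃], ?_, ?_, fun z => z ^ 3, fun z _ => by fun_prop, zero_pow three_ne_zero,
    fun z hz => norm_pow_lt_one_of_mem_ball hz three_ne_zero,
    fun z hz => (hasDerivAt_f₃ hz).deriv⟩
  · rw [(hasDerivAt_f₃ (mem_ball_self one_pos)).deriv]
    simpa using sqrtOneAddTanh_zero
  · exact (convex_ball 0 1).injOn_of_hasDerivAt_of_re_pos (fun z hz => hasDerivAt_f₃ hz)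
      fun z hz => re_psqrt_pos (one_add_tanh_mem_slitPlane (abs_im_pow_three_lt hz))

lemma deriv_deriv_f₃_eventuallyEq :
    deriv (deriv f₃) =ᶠ[𝓝 0] fun z => z ^ 2 * (3 * deriv sqrtOneAddTanh (z ^ 3)) := by
  filter_upwards [isOpen_ball.mem_nhds (mem_ball_self one_pos)] with z hz
  have hderiv : deriv f₃ =ᶠ[𝓝 z] fun w => sqrtOneAddTanh (w ^ 3) :=
    eventually_of_mem (isOpen_ball.mem_nhds hz) fun w hw => (hasDerivAt_f₃ hw).deriv
  have hdiff := (hasDerivAt_sqrtOneAddTanh (abs_im_pow_three_lt hz)).differentiableAt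
  rw [hderiv.deriv_eq]
  refine (hdiff.hasDerivAt.comp z (hasDerivAt_pow 3 z)).deriv.trans ?_
  push_cast
  ring

lemma tCoeff_f₃_add_two (n : ℕ) :
    tCoeff f₃ (n + 2) =
      iteratedDeriv n (fun z => z ^ 2 * (3 * deriv sqrtOneAddTanh (z ^ 3))) 0 / (n + 2)! := by
  rw [tCoeff, iteratedDeriv_succ', iteratedDeriv_succ',
    deriv_deriv_f₃_eventuallyEq.iteratedDeriv_eq]

lemma contDiffAt_deriv_sqrtOneAddTanh_comp_pow_three (n : ℕ) :
    ContDiffAt ℂ n (fun z => 3 * deriv sqrtOneAddTanh (z ^ 3)) 0 := by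
  have h := (analyticOnNhd_sqrtOneAddTanh 0 (by simpa using Real.pi_pos)).deriv
  exact (analyticAt_const.mul (h.comp_of_eq (by fun_prop) (by simp))).contDiffAt

theorem BTB_zalcman_sharp :
    IsBTB f₃ ∧ tCoeff f₃ 2 = 0 ∧ tCoeff f₃ 3 = 0 ∧ tCoeff f₃ 4 = 1/8 ∧
      ‖tCoeff f₃ 2 * tCoeff f₃ 3 - tCoeff f₃ 4‖ = 1/8 := by
  have hk := contDiffAt_deriv_sqrtOneAddTanh_comp_pow_three
  have ha₂ : tCoeff f₃ 2 = 0 := by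
    rw [tCoeff_f₃_add_two 0]
    simp
  have ha₃ : tCoeff f₃ 3 = 0 := by
    rw [tCoeff_f₃_add_two 1, iteratedDeriv_pow_mul_zero 2 (hk 1)]
    simp
  have ha₄ : tCoeff f₃ 4 = 1 / 8 := by
    rw [tCoeff_f₃_add_two 2, iteratedDeriv_pow_mul_zero 2 (hk 2)]
    norm_num [deriv_sqrtOneAddTanh_zero, Nat.factorial]
  refine ⟨isBTB_f₃, ha₂, ha₃, ha₄, ?_⟩
  rw [ha₂, ha₃, ha₄]
  norm_num
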